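/- arXiv:0807.0169 — 5 statements merged into one kernel-verified Lean document; each statement's English description precedes it below -/
import Mathlib

section
/- Let x_1, …, x_N ∈ H with ‖x_k‖ ≤ C for all k, let p be a sampling design with min_k π_k ≥ λ > 0, and set α_k = I_k/π_k − 1. Then E_p ‖(1/N) ∑_{k∈U} α_k x_k‖² ≤ C²/(λ N) + C² ((N−1)/N) · max_{k≠l} |Δ_kl| / λ². -/
/-!
Expanding the square, `E‖∑ α_k x_k‖² = ∑_{k,l} E(α_k α_l) ⟪x_k, x_l⟫` with
`E(α_k α_l) = Δ_kl / (π_k π_l)`. The `N` diagonal terms equal `(1/π_k - 1) ‖x_k‖² ≤ C²/λ`,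
and by Cauchy–Schwarz each of the `N(N-1)` off-diagonal terms is at most `C² max |Δ_kl| / λ²`.
-/
open scoped RealInnerProductSpace
open Finset

section InnerProduct

variable {H : Type*} [NormedAddCommGroup H] [InnerProductSpace ℝ H]

theorem norm_sum_smul_sq {ι : Type*} [Fintype ι] (a : ι → ℝ) (x : ι → H) :
    ‖∑ k, a k • x k‖ ^ 2 = ∑ k, ∑ l, a k * a l * ⟪x k, x l⟫ := by
  rw [← real_inner_self_eq_norm_sq, sum_inner]
  refine sum_congr rfl fun k _ => ?_
  rw [real_inner_smul_left, inner_sum, mul_sum]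
  refine sum_congr rfl fun l _ => ?_
  rw [real_inner_smul_right, mul_assoc]

theorem sum_mul_norm_sum_smul_sq {σ ι : Type*} [Fintype σ] [Fintype ι]
    (p : σ → ℝ) (a : σ → ι → ℝ) (x : ι → H) :
    ∑ s, p s * ‖∑ k, a s k • x k‖ ^ 2 =
      ∑ k, ∑ l, (∑ s, p s * (a s k * a s l)) * ⟪x k, x l⟫ := by
  simp_rw [norm_sum_smul_sq, mul_sum, sum_mul]
  rw [sum_comm]
  refine sum_congr rfl fun k _ => ?_
  rw [sum_comm]
  refine sum_congr rfl fun l _ => sum_congr rfl fun s _ => by ring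

theorem inv_sub_one_mul_inner_self_le {π lam C : ℝ} {x : H} (hlam : 0 < lam) (hπ : lam ≤ π)
    (hx : ‖x‖ ≤ C) : (π⁻¹ - 1) * ⟪x, x⟫ ≤ C ^ 2 / lam := by
  have hx2 : ‖x‖ ^ 2 ≤ C ^ 2 := pow_le_pow_left₀ (norm_nonneg x) hx 2
  rw [real_inner_self_eq_norm_sq]
  calc (π⁻¹ - 1) * ‖x‖ ^ 2 ≤ lam⁻¹ * ‖x‖ ^ 2 := by
        gcongr
        exact (sub_le_self _ zero_le_one).trans (inv_anti₀ hlam hπ)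
    _ ≤ lam⁻¹ * C ^ 2 := by gcongr
    _ = C ^ 2 / lam := inv_mul_eq_div _ _

theorem div_mul_mul_inner_le {Δ D π π' lam C : ℝ} {x y : H} (hΔ : |Δ| ≤ D) (hlam : 0 < lam)
    (hπ : lam ≤ π) (hπ' : lam ≤ π') (hx : ‖x‖ ≤ C) (hy : ‖y‖ ≤ C) :
    Δ / (π * π') * ⟪x, y⟫ ≤ C ^ 2 * D / lam ^ 2 := by
  have hD : 0 ≤ D := (abs_nonneg Δ).trans hΔ
  have hC : 0 ≤ C := (norm_nonneg x).trans hx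
  have hππ' : 0 < π * π' := mul_pos (hlam.trans_le hπ) (hlam.trans_le hπ')
  calc Δ / (π * π') * ⟪x, y⟫ ≤ |Δ| / (π * π') * |⟪x, y⟫| := by
        rw [← abs_of_pos hππ', ← abs_div, ← abs_mul, abs_of_pos hππ']
        exact le_abs_self _
    _ ≤ D / lam ^ 2 * (C * C) := by
        gcongr
        · rw [sq]
          exact mul_le_mul hπ hπ' hlam.le (hlam.trans_le hπ).le
        · exact (abs_real_inner_le_norm x y).trans (mul_le_mul hx hy (norm_nonneg y) hC)
    _ = C ^ 2 * D / lam ^ 2 := by ring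

end InnerProduct

theorem le_ciSup_ciSup_ne {ι : Type*} [Finite ι] (f : ι → ι → ℝ) {k l : ι} (h : k ≠ l) :
    f k l ≤ ⨆ k, ⨆ l, ⨆ _ : k ≠ l, f k l :=
  calc f k l = ⨆ _ : k ≠ l, f k l := (ciSup_pos (f := fun _ => f k l) h).symm
    _ ≤ ⨆ l, ⨆ _ : k ≠ l, f k l :=
        le_ciSup (f := fun l => ⨆ _ : k ≠ l, f k l) (Set.finite_range _).bddAbove l
    _ ≤ ⨆ k, ⨆ l, ⨆ _ : k ≠ l, f k l :=
        le_ciSup (f := fun k => ⨆ l, ⨆ _ : k ≠ l, f k l) (Set.finite_range _).bddAbove k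

section Design

variable {ι : Type*} [Fintype ι]

theorem sum_mul_ite_sub_one_mul_ite_sub_one [DecidableEq ι] (p : Finset ι → ℝ) (k l : ι)
    (a b : ℝ) :
    ∑ s, p s * (((if k ∈ s then a else 0) - 1) * ((if l ∈ s then b else 0) - 1)) =
      a * b * (∑ s, if k ∈ s ∧ l ∈ s then p s else 0) - a * (∑ s, if k ∈ s then p s else 0)
        - b * (∑ s, if l ∈ s then p s else 0) + ∑ s, p s := by
  simp only [mul_sum, ← sum_sub_distrib, ← sum_add_distrib]
  refine sum_congr rfl fun s _ => ?_
  by_cases hk : k ∈ s <;> by_cases hl : l ∈ s <;> simp [hk, hl] <;> ring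

theorem sum_sum_le_of_diag_le_of_ne_le [DecidableEq ι] {M : ι → ι → ℝ} {A B : ℝ}
    (hdiag : ∀ k, M k k ≤ A) (hoff : ∀ k l, k ≠ l → M k l ≤ B) :
    ∑ k, ∑ l, M k l ≤ Fintype.card ι * (A + (Fintype.card ι - 1) * B) := by
  have hrow : ∀ k, ∑ l, M k l ≤ A + (Fintype.card ι - 1) * B := fun k =>
    calc ∑ l, M k l = M k k + ∑ l ∈ univ.erase k, M k l :=
          (add_sum_erase _ _ (mem_univ k)).symm
      _ ≤ A + ∑ l ∈ univ.erase k, B :=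
          add_le_add (hdiag k) (sum_le_sum fun l hl => hoff k l (ne_of_mem_erase hl).symm)
      _ = A + (Fintype.card ι - 1) * B := by
          rw [sum_const, card_erase_of_mem (mem_univ k), card_univ, nsmul_eq_mul,
            Nat.cast_pred (Fintype.card_pos_iff.2 ⟨k⟩)]
  calc ∑ k, ∑ l, M k l ≤ ∑ _k : ι, (A + (Fintype.card ι - 1) * B) :=
        sum_le_sum fun k _ => hrow k
    _ = _ := by rw [sum_const, card_univ, nsmul_eq_mul]

end Design

theorem variance_bound_for_weighted_HT_sum_general
    {H : Type*} [NormedAddCommGroup H] [InnerProductSpace ℝ H]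
    (N : ℕ) (C lam : ℝ) (hlam : 0 < lam)
    (x : Fin N → H) (hx : ∀ k, ‖x k‖ ≤ C)
    (p : Finset (Fin N) → ℝ)
    (hp1 : ∑ s : Finset (Fin N), p s = 1)
    (π : Fin N → ℝ)
    (hπ : ∀ k, π k = ∑ s : Finset (Fin N), (if k ∈ s then p s else 0))
    (hπlb : ∀ k, lam ≤ π k)
    (πd : Fin N → Fin N → ℝ)
    (hπd : ∀ k l, πd k l = ∑ s : Finset (Fin N), (if k ∈ s ∧ l ∈ s then p s else 0)) :
    ∑ s : Finset (Fin N),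
        p s * ‖(N : ℝ)⁻¹ • ∑ k, ((if k ∈ s then (π k)⁻¹ else 0) - 1) • x k‖ ^ 2
      ≤ C ^ 2 / (lam * N) +
        C ^ 2 * (((N : ℝ) - 1) / N) *
          (⨆ k, ⨆ l, ⨆ _ : k ≠ l, |πd k l - π k * π l|) / lam ^ 2 := by
  set D := ⨆ k, ⨆ l, ⨆ _ : k ≠ l, |πd k l - π k * π l|
  have hπne k : π k ≠ 0 := (hlam.trans_le (hπlb k)).ne'
  have hsecondMoment k l : ∑ s, p s * (((if k ∈ s then (π k)⁻¹ else 0) - 1) *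
      ((if l ∈ s then (π l)⁻¹ else 0) - 1)) = (πd k l - π k * π l) / (π k * π l) := by
    rw [sum_mul_ite_sub_one_mul_ite_sub_one, ← hπ, ← hπ, ← hπd, hp1]
    field_simp [hπne k, hπne l]
    ring
  have hπdiag k : πd k k = π k := by simp only [hπd, hπ, and_self]
  calc _ = ((N : ℝ)⁻¹) ^ 2 * ∑ k, ∑ l, (πd k l - π k * π l) / (π k * π l) * ⟪x k, x l⟫ := by
        simp_rw [norm_smul, mul_pow, Real.norm_eq_abs, sq_abs, mul_left_comm (p _), ← mul_sum,
          sum_mul_norm_sum_smul_sq, hsecondMoment]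
    _ ≤ ((N : ℝ)⁻¹) ^ 2 * (N * (C ^ 2 / lam + (N - 1) * (C ^ 2 * D / lam ^ 2))) := by
        gcongr
        refine (sum_sum_le_of_diag_le_of_ne_le (fun k => ?_) (fun k l hkl => ?_)).trans_eq
          (by rw [Fintype.card_fin])
        · rw [hπdiag, sub_div, div_mul_cancel_right₀ (hπne k),
            div_self (mul_ne_zero (hπne k) (hπne k))]
          exact inv_sub_one_mul_inner_self_le hlam (hπlb k) (hx k)
        · exact div_mul_mul_inner_le (le_ciSup_ciSup_ne (fun k l => |πd k l - π k * π l|) hkl)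
            hlam (hπlb k) (hπlb l) (hx k) (hx l)
    _ = _ := by
        rcases eq_or_ne (N : ℝ) 0 with hN | hN
        · simp [hN]
        · field_simp

/-- Let `x_1, …, x_N ∈ H` with `‖x_k‖ ≤ C`, let `p` be a sampling design with
`min_k π_k ≥ λ > 0`, and set `α_k = I_k/π_k − 1`.  Then
`E_p ‖(1/N) ∑_k α_k x_k‖² ≤ C²/(λN) + C² ((N−1)/N) · max_{k≠l} |Δ_kl| / λ²`. -/
theorem variance_bound_for_weighted_HT_sum
    {H : Type*} [NormedAddCommGroup H] [InnerProductSpace ℝ H] [CompleteSpace H]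
    (N : ℕ) (hN : 0 < N) (C lam : ℝ) (hlam : 0 < lam)
    (x : Fin N → H) (hx : ∀ k, ‖x k‖ ≤ C)
    (p : Finset (Fin N) → ℝ) (hp0 : ∀ s, 0 ≤ p s)
    (hp1 : ∑ s : Finset (Fin N), p s = 1)
    (π : Fin N → ℝ)
    (hπ : ∀ k, π k = ∑ s : Finset (Fin N), (if k ∈ s then p s else 0))
    (hπpos : ∀ k, 0 < π k) (hπlb : ∀ k, lam ≤ π k)
    (πd : Fin N → Fin N → ℝ)
    (hπd : ∀ k l, πd k l = ∑ s : Finset (Fin N), (if k ∈ s ∧ l ∈ s then p s else 0)) :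
    ∑ s : Finset (Fin N),
        p s * ‖(N : ℝ)⁻¹ • ∑ k, ((if k ∈ s then (π k)⁻¹ else 0) - 1) • x k‖ ^ 2
      ≤ C ^ 2 / (lam * N) +
        C ^ 2 * (((N : ℝ) - 1) / N) *
          (⨆ k, ⨆ l, ⨆ _ : k ≠ l, |πd k l - π k * π l|) / lam ^ 2 :=
  variance_bound_for_weighted_HT_sum_general N C lam hlam x hx p hp1 π hπ hπlb πd hπd
end

section
/- Under assumptions (A1), (A2) and (A3), the substitution estimator μ̂_ν = (1/N̂_ν) ∑_{k∈s_ν} Y_{k,ν}/π_{k,ν} of the mean curve μ_ν = (1/N_ν) ∑_{k∈U_ν} Y_{k,ν} satisfies E_{p_ν} ‖μ_ν − μ̂_ν‖² = O(1/n_ν); that is, there exists a constant C′ such that for all ν, n_ν · E_{p_ν} ‖μ_ν − μ̂_ν‖² ≤ C′. In particular μ̂_ν is asymptotically design unbiased and consistent. -/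
open scoped RealInnerProductSpace
open Filter Topology

noncomputable section

/-!
Put `Z_k = μ - Y_k`, so that `∑ Z_k = 0` and `μ - μ̂(s) = N̂(s)⁻¹ ∑_{k∈s} Z_k / π_k`, where
`N̂(s) ≥ #s = n` because `π_k ≤ 1`. The second moment of the Horvitz–Thompson sum
`∑_{k∈s} Z_k / π_k` is `∑_{k,l} π_{kl} ⟪Z_k, Z_l⟫ / (π_k π_l)`, and since `∑ Z_k = 0` the
`π_{kl}` may be replaced by `Δ_{kl}`. By (A1) and (A3) the `N` diagonal terms are `O(1)` and the
`N²` off-diagonal ones `O(1/n)`, so `n E‖μ - μ̂‖² = O(N/n + (N/n)²)`, which is bounded by (A2).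
-/

open Finset

section HajekEstimator

variable {U E : Type*} [AddCommGroup E] [Module ℝ E]

def hajek (π : U → ℝ) (Y : U → E) (s : Finset U) : E :=
  (∑ k ∈ s, (π k)⁻¹)⁻¹ • ∑ k ∈ s, (π k)⁻¹ • Y k

theorem sub_hajek_eq {π : U → ℝ} {s : Finset U} (hs : ∑ k ∈ s, (π k)⁻¹ ≠ 0) (m : E)
    (Y : U → E) :
    m - hajek π Y s = (∑ k ∈ s, (π k)⁻¹)⁻¹ • ∑ k ∈ s, (π k)⁻¹ • (m - Y k) := by
  simp only [hajek, smul_sub, sum_sub_distrib, ← sum_smul, smul_smul, inv_mul_cancel₀ hs,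
    one_smul]

end HajekEstimator

section SamplingDesign

variable {U H : Type*} [NormedAddCommGroup H] [InnerProductSpace ℝ H]

theorem norm_sum_sq_eq_sum_sum_inner (s : Finset U) (Z : U → H) :
    ‖∑ k ∈ s, Z k‖ ^ 2 = ∑ k ∈ s, ∑ l ∈ s, ⟪Z k, Z l⟫ := by
  rw [← real_inner_self_eq_norm_sq, sum_inner]
  simp only [inner_sum]

theorem norm_sub_hajek_sq_le {π : U → ℝ} {s : Finset U} (hs : s.Nonempty)
    (hπ0 : ∀ k ∈ s, 0 < π k) (hπ1 : ∀ k ∈ s, π k ≤ 1) (m : H) (Y : U → H) :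
    ‖m - hajek π Y s‖ ^ 2 ≤ ((#s : ℝ) ^ 2)⁻¹ * ‖∑ k ∈ s, (π k)⁻¹ • (m - Y k)‖ ^ 2 := by
  have hcard : (#s : ℝ) ≤ ∑ k ∈ s, (π k)⁻¹ := by
    simpa using card_nsmul_le_sum s _ 1 fun k hk => (one_le_inv₀ (hπ0 k hk)).2 (hπ1 k hk)
  have hpos : (0 : ℝ) < #s := Nat.cast_pos.2 hs.card_pos
  rw [sub_hajek_eq (hpos.trans_le hcard).ne', norm_smul, mul_pow, Real.norm_eq_abs, sq_abs,
    ← inv_pow]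
  gcongr
  exact inv_nonneg.2 (hpos.le.trans hcard)

variable [Fintype U]

theorem sum_average_sub_eq_zero (Y : U → H) :
    ∑ k, ((Fintype.card U : ℝ)⁻¹ • ∑ l, Y l - Y k) = 0 := by
  rcases isEmpty_or_nonempty U with hU | hU
  · simp
  rw [sum_sub_distrib, sum_const, card_univ, ← Nat.cast_smul_eq_nsmul ℝ, smul_smul,
    mul_inv_cancel₀ (by positivity), one_smul, sub_self]

theorem norm_average_sub_le {C : ℝ} {Y : U → H} (hY : ∀ k, ‖Y k‖ ≤ C) (k : U) :
    ‖(Fintype.card U : ℝ)⁻¹ • ∑ l, Y l - Y k‖ ≤ 2 * C := by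
  have hN : (0 : ℝ) < Fintype.card U := Nat.cast_pos.2 (Fintype.card_pos_iff.2 ⟨k⟩)
  have havg : ‖(Fintype.card U : ℝ)⁻¹ • ∑ l, Y l‖ ≤ C := by
    rw [norm_smul, norm_inv, Real.norm_natCast, inv_mul_le_iff₀ hN]
    simpa using norm_sum_le_of_le univ fun l _ => hY l
  linarith [norm_sub_le ((Fintype.card U : ℝ)⁻¹ • ∑ l, Y l) (Y k), hY k]

variable [DecidableEq U]

def inclusionProb (p : Finset U → ℝ) (k : U) : ℝ :=
  ∑ s, if k ∈ s then p s else 0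

def jointInclusionProb (p : Finset U → ℝ) (k l : U) : ℝ :=
  ∑ s, if k ∈ s ∧ l ∈ s then p s else 0

variable {p : Finset U → ℝ}

theorem inclusionProb_le_one (hp0 : ∀ s, 0 ≤ p s) (hp1 : ∑ s, p s = 1) (k : U) :
    inclusionProb p k ≤ 1 :=
  hp1 ▸ sum_le_sum fun s _ => by split_ifs <;> simp [hp0 s]

theorem jointInclusionProb_self (k : U) : jointInclusionProb p k k = inclusionProb p k := by
  simp [jointInclusionProb, inclusionProb]

theorem sum_sum_mul_le_of_abs_le {Δ x : U → U → ℝ} {d A : ℝ} (hd : 0 ≤ d)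
    (hdiag : ∀ k, |Δ k k| ≤ 1) (hoff : ∀ k l, k ≠ l → |Δ k l| ≤ d) (hx : ∀ k l, |x k l| ≤ A) :
    ∑ k, ∑ l, Δ k l * x k l ≤ (Fintype.card U + Fintype.card U ^ 2 * d) * A := by
  have hΔ : ∀ k l, |Δ k l| ≤ (if k = l then 1 else 0) + d := by
    intro k l
    split_ifs with h
    · subst h; linarith [hdiag k]
    · simpa using hoff k l h
  calc ∑ k, ∑ l, Δ k l * x k l ≤ ∑ k, ∑ l, ((if k = l then 1 else 0) + d) * A := by
        refine sum_le_sum fun k _ => sum_le_sum fun l _ => ?_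
        calc Δ k l * x k l ≤ |Δ k l| * |x k l| := (le_abs_self _).trans (abs_mul _ _).le
          _ ≤ _ := mul_le_mul (hΔ k l) (hx k l) (abs_nonneg _) (by positivity)
    _ = (Fintype.card U + Fintype.card U ^ 2 * d) * A := by
        simp only [add_mul, sum_add_distrib, ite_mul, one_mul, zero_mul, sum_ite_eq, mem_univ,
          if_true, sum_const, card_univ, nsmul_eq_mul]
        ring

theorem sum_mul_norm_sum_smul_sq_s9 (w : U → ℝ) (Z : U → H) :
    ∑ s, p s * ‖∑ k ∈ s, w k • Z k‖ ^ 2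
      = ∑ k, ∑ l, jointInclusionProb p k l * (w k * w l * ⟪Z k, Z l⟫) := by
  have hs : ∀ s : Finset U, p s * ‖∑ k ∈ s, w k • Z k‖ ^ 2
      = ∑ k, ∑ l, (if k ∈ s ∧ l ∈ s then p s else 0) * (w k * w l * ⟪Z k, Z l⟫) := by
    intro s
    rw [norm_sum_sq_eq_sum_sum_inner, mul_sum, ← univ_inter s, ← sum_ite_mem]
    refine sum_congr rfl fun k _ => ?_
    by_cases hk : k ∈ s
    · simp only [hk, true_and, ite_mul, zero_mul, sum_ite_mem, univ_inter, mul_sum,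
        real_inner_smul_left, real_inner_smul_right, if_true]
      exact sum_congr rfl fun l _ => by ring
    · simp [hk]
  simp only [hs, jointInclusionProb, sum_mul]
  rw [sum_comm]
  exact sum_congr rfl fun k _ => sum_comm

theorem sum_mul_norm_sum_inv_smul_sq_le (hp0 : ∀ s, 0 ≤ p s) (hp1 : ∑ s, p s = 1)
    {lam d B : ℝ} (hlam : 0 < lam) (hπ : ∀ k, lam ≤ inclusionProb p k) (hd : 0 ≤ d)
    (hΔ : ∀ k l, k ≠ l →
      |jointInclusionProb p k l - inclusionProb p k * inclusionProb p l| ≤ d)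
    {Z : U → H} (hZ : ∑ k, Z k = 0) (hZB : ∀ k, ‖Z k‖ ≤ B) :
    ∑ s, p s * ‖∑ k ∈ s, (inclusionProb p k)⁻¹ • Z k‖ ^ 2
      ≤ (Fintype.card U + Fintype.card U ^ 2 * d) * (B / lam) ^ 2 := by
  set π := inclusionProb p
  set x : U → U → ℝ := fun k l => (π k)⁻¹ * (π l)⁻¹ * ⟪Z k, Z l⟫
  have hπ0 : ∀ k, 0 < π k := fun k => hlam.trans_le (hπ k)
  have hcentred : ∑ k, ∑ l, π k * π l * x k l = 0 := by
    calc ∑ k, ∑ l, π k * π l * x k l = ‖∑ k, Z k‖ ^ 2 := by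
          rw [norm_sum_sq_eq_sum_sum_inner]
          refine sum_congr rfl fun k _ => sum_congr rfl fun l _ => ?_
          simp only [x]
          field_simp [(hπ0 k).ne', (hπ0 l).ne']
      _ = 0 := by simp [hZ]
  have hdiag : ∀ k, |jointInclusionProb p k k - π k * π k| ≤ 1 := by
    intro k
    have h1 := inclusionProb_le_one hp0 hp1 k
    rw [jointInclusionProb_self, abs_le]
    constructor <;> nlinarith [hπ0 k]
  have hZπ : ∀ k, ‖Z k‖ / π k ≤ B / lam := fun k =>
    div_le_div₀ ((norm_nonneg _).trans (hZB k)) (hZB k) hlam (hπ k)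
  have hx : ∀ k l, |x k l| ≤ (B / lam) ^ 2 := by
    intro k l
    calc |x k l| = |⟪Z k, Z l⟫| / π k / π l := by
          simp only [x, abs_mul, abs_inv, abs_of_pos (hπ0 _)]
          ring
      _ ≤ ‖Z k‖ * ‖Z l‖ / π k / π l := by
          gcongr
          · exact (hπ0 l).le
          · exact (hπ0 k).le
          · exact abs_real_inner_le_norm _ _
      _ = ‖Z k‖ / π k * (‖Z l‖ / π l) := by ring
      _ ≤ (B / lam) ^ 2 := by
          rw [sq]
          exact mul_le_mul (hZπ k) (hZπ l) (div_nonneg (norm_nonneg _) (hπ0 l).le)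
            ((div_nonneg (norm_nonneg _) (hπ0 k).le).trans (hZπ k))
  calc ∑ s, p s * ‖∑ k ∈ s, (π k)⁻¹ • Z k‖ ^ 2
      = ∑ k, ∑ l, jointInclusionProb p k l * x k l := sum_mul_norm_sum_smul_sq_s9 _ _
    _ = ∑ k, ∑ l, (jointInclusionProb p k l - π k * π l) * x k l := by
        simp only [sub_mul, sum_sub_distrib, hcentred, sub_zero]
    _ ≤ (Fintype.card U + Fintype.card U ^ 2 * d) * (B / lam) ^ 2 :=
        sum_sum_mul_le_of_abs_le hd hdiag hΔ hx

theorem sum_mul_norm_average_sub_hajek_sq_le (hp0 : ∀ s, 0 ≤ p s) (hp1 : ∑ s, p s = 1)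
    {n : ℕ} (hn : 0 < n) (hsize : ∀ s, p s ≠ 0 → #s = n)
    {lam d C : ℝ} (hlam : 0 < lam) (hπ : ∀ k, lam ≤ inclusionProb p k) (hd : 0 ≤ d)
    (hΔ : ∀ k l, k ≠ l →
      |jointInclusionProb p k l - inclusionProb p k * inclusionProb p l| ≤ d)
    {Y : U → H} (hY : ∀ k, ‖Y k‖ ≤ C) :
    ∑ s, p s * ‖(Fintype.card U : ℝ)⁻¹ • ∑ k, Y k - hajek (inclusionProb p) Y s‖ ^ 2
      ≤ ((n : ℝ) ^ 2)⁻¹ *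
        ((Fintype.card U + Fintype.card U ^ 2 * d) * (2 * C / lam) ^ 2) := by
  set m := (Fintype.card U : ℝ)⁻¹ • ∑ k, Y k
  set π := inclusionProb p
  calc ∑ s, p s * ‖m - hajek π Y s‖ ^ 2
      ≤ ∑ s, ((n : ℝ) ^ 2)⁻¹ * (p s * ‖∑ k ∈ s, (π k)⁻¹ • (m - Y k)‖ ^ 2) := by
        refine sum_le_sum fun s _ => ?_
        rcases eq_or_ne (p s) 0 with hs | hs
        · simp [hs]
        have hcard := hsize s hs
        have hbound := norm_sub_hajek_sq_le (card_pos.1 (hcard ▸ hn))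
          (fun k _ => hlam.trans_le (hπ k)) (fun k _ => inclusionProb_le_one hp0 hp1 k) m Y
        rw [hcard] at hbound
        calc p s * ‖m - hajek π Y s‖ ^ 2
            ≤ p s * (((n : ℝ) ^ 2)⁻¹ * ‖∑ k ∈ s, (π k)⁻¹ • (m - Y k)‖ ^ 2) :=
              mul_le_mul_of_nonneg_left hbound (hp0 s)
          _ = _ := by ring
    _ = ((n : ℝ) ^ 2)⁻¹ * ∑ s, p s * ‖∑ k ∈ s, (π k)⁻¹ • (m - Y k)‖ ^ 2 := (mul_sum _ _ _).symm
    _ ≤ _ := by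
        gcongr
        exact sum_mul_norm_sum_inv_smul_sq_le hp0 hp1 hlam hπ hd hΔ
          (sum_average_sub_eq_zero Y) (norm_average_sub_le hY)

end SamplingDesign

theorem mean_curve_estimator_consistent_general
    {H : Type*} [NormedAddCommGroup H] [InnerProductSpace ℝ H]
    (Nn n : ℕ → ℕ)
    (Y : (ν : ℕ) → Fin (Nn ν) → H)
    (p : (ν : ℕ) → Finset (Fin (Nn ν)) → ℝ)
    (hp0 : ∀ ν s, 0 ≤ p ν s)
    (hp1 : ∀ ν, ∑ s : Finset (Fin (Nn ν)), p ν s = 1)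
    (hsize : ∀ ν s, p ν s ≠ 0 → s.card = n ν)
    (π : (ν : ℕ) → Fin (Nn ν) → ℝ)
    (hπ : ∀ ν k, π ν k = ∑ s : Finset (Fin (Nn ν)), (if k ∈ s then p ν s else 0))
    (πd : (ν : ℕ) → Fin (Nn ν) → Fin (Nn ν) → ℝ)
    (hπd : ∀ ν k l, πd ν k l = ∑ s : Finset (Fin (Nn ν)), (if k ∈ s ∧ l ∈ s then p ν s else 0))
    -- (A1)
    (C : ℝ) (hA1 : ∀ ν k, ‖Y ν k‖ ≤ C)
    -- (A2)
    (π₀ : ℝ) (hπ₀ : π₀ ∈ Set.Ioo (0 : ℝ) 1)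
    (hA2 : Tendsto (fun ν => (n ν : ℝ) / (Nn ν : ℝ)) atTop (𝓝 π₀))
    -- (A3)
    (lam : ℝ) (hlam : 0 < lam)
    (hA3a : ∀ ν k, lam ≤ π ν k)
    (CΔ : ℝ)
    (hA3c : ∀ ν (k l : Fin (Nn ν)), k ≠ l → (n ν : ℝ) * |πd ν k l - π ν k * π ν l| ≤ CΔ)
    -- estimators
    (Nhat : (ν : ℕ) → Finset (Fin (Nn ν)) → ℝ)
    (hNhat : ∀ ν s, Nhat ν s = ∑ k ∈ s, (π ν k)⁻¹)
    (μp : (ν : ℕ) → H) (hμp : ∀ ν, μp ν = (Nn ν : ℝ)⁻¹ • ∑ k, Y ν k)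
    (μhat : (ν : ℕ) → Finset (Fin (Nn ν)) → H)
    (hμhat : ∀ ν s, μhat ν s = (Nhat ν s)⁻¹ • ∑ k ∈ s, (π ν k)⁻¹ • Y ν k) :
    ∃ C' : ℝ, ∀ ν, (n ν : ℝ) *
        ∑ s : Finset (Fin (Nn ν)), p ν s * ‖μp ν - μhat ν s‖ ^ 2 ≤ C' := by
  obtain ⟨M, hM⟩ : BddAbove (Set.range fun ν => (Nn ν : ℝ) / n ν) := by
    simpa only [inv_div] using (hA2.inv₀ hπ₀.1.ne').bddAbove_range
  have hM0 : 0 ≤ M := (div_nonneg (Nat.cast_nonneg _) (Nat.cast_nonneg _)).trans (hM ⟨0, rfl⟩)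
  set D := max CΔ 0
  set A := (2 * C / lam) ^ 2
  refine ⟨M * A + M ^ 2 * (D * A), fun ν => ?_⟩
  rcases (n ν).eq_zero_or_pos with hn0 | hnpos
  · simp only [hn0, Nat.cast_zero, zero_mul]
    positivity
  have hnR : (0 : ℝ) < n ν := Nat.cast_pos.2 hnpos
  have hπν : π ν = inclusionProb (p ν) := funext (hπ ν)
  have hπdν : πd ν = jointInclusionProb (p ν) := funext₂ (hπd ν)
  have hμhatν : μhat ν = hajek (π ν) (Y ν) := funext fun s => by rw [hμhat, hNhat]; rfl
  have hΔ : ∀ k l, k ≠ l → |jointInclusionProb (p ν) k l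
      - inclusionProb (p ν) k * inclusionProb (p ν) l| ≤ D / n ν := fun k l hkl => by
    rw [← hπν, ← hπdν, le_div_iff₀ hnR, mul_comm]
    exact (hA3c ν k l hkl).trans (le_max_left _ _)
  have hmse := sum_mul_norm_average_sub_hajek_sq_le (hp0 ν) (hp1 ν) hnpos (hsize ν) hlam
    (hπν ▸ hA3a ν) (by positivity) hΔ (hA1 ν)
  rw [Fintype.card_fin, ← hπν, ← hμp, ← hμhatν] at hmse
  calc (n ν : ℝ) * ∑ s, p ν s * ‖μp ν - μhat ν s‖ ^ 2
      ≤ n ν * (((n ν : ℝ) ^ 2)⁻¹ * ((Nn ν + Nn ν ^ 2 * (D / n ν)) * A)) := by gcongr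
    _ = Nn ν / n ν * A + (Nn ν / n ν) ^ 2 * (D * A) := by field_simp
    _ ≤ M * A + M ^ 2 * (D * A) := by
        have hle : (Nn ν : ℝ) / n ν ≤ M := hM ⟨ν, rfl⟩
        gcongr

/-- Under (A1), (A2), (A3), the substitution estimator
`μ̂_ν = (1/N̂_ν) ∑_{k∈s_ν} Y_{k,ν}/π_{k,ν}` of the mean curve
`μ_ν = (1/N_ν) ∑_{k∈U_ν} Y_{k,ν}` satisfies `E_{p_ν} ‖μ_ν − μ̂_ν‖² = O(1/n_ν)`:
there is a constant `C′` with `n_ν · E_{p_ν} ‖μ_ν − μ̂_ν‖² ≤ C′` for all `ν`. -/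
theorem mean_curve_estimator_consistent
    {H : Type*} [NormedAddCommGroup H] [InnerProductSpace ℝ H] [CompleteSpace H]
    (Nn n : ℕ → ℕ) (hNpos : ∀ ν, 0 < Nn ν) (hNmono : StrictMono Nn)
    (hn : Tendsto n atTop atTop)
    (Y : (ν : ℕ) → Fin (Nn ν) → H)
    (p : (ν : ℕ) → Finset (Fin (Nn ν)) → ℝ)
    (hp0 : ∀ ν s, 0 ≤ p ν s)
    (hp1 : ∀ ν, ∑ s : Finset (Fin (Nn ν)), p ν s = 1)
    (hsize : ∀ ν s, p ν s ≠ 0 → s.card = n ν)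
    (π : (ν : ℕ) → Fin (Nn ν) → ℝ)
    (hπ : ∀ ν k, π ν k = ∑ s : Finset (Fin (Nn ν)), (if k ∈ s then p ν s else 0))
    (πd : (ν : ℕ) → Fin (Nn ν) → Fin (Nn ν) → ℝ)
    (hπd : ∀ ν k l, πd ν k l = ∑ s : Finset (Fin (Nn ν)), (if k ∈ s ∧ l ∈ s then p ν s else 0))
    -- (A1)
    (C : ℝ) (hA1 : ∀ ν k, ‖Y ν k‖ ≤ C)
    -- (A2)
    (π₀ : ℝ) (hπ₀ : π₀ ∈ Set.Ioo (0 : ℝ) 1)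
    (hA2 : Tendsto (fun ν => (n ν : ℝ) / (Nn ν : ℝ)) atTop (𝓝 π₀))
    -- (A3)
    (lam lamStar : ℝ) (hlam : 0 < lam) (hlamStar : 0 < lamStar)
    (hA3a : ∀ ν k, lam ≤ π ν k)
    (hA3b : ∀ ν k l, k ≠ l → lamStar ≤ πd ν k l)
    (CΔ : ℝ)
    (hA3c : ∀ ν (k l : Fin (Nn ν)), k ≠ l → (n ν : ℝ) * |πd ν k l - π ν k * π ν l| ≤ CΔ)
    -- estimators
    (Nhat : (ν : ℕ) → Finset (Fin (Nn ν)) → ℝ)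
    (hNhat : ∀ ν s, Nhat ν s = ∑ k ∈ s, (π ν k)⁻¹)
    (μp : (ν : ℕ) → H) (hμp : ∀ ν, μp ν = (Nn ν : ℝ)⁻¹ • ∑ k, Y ν k)
    (μhat : (ν : ℕ) → Finset (Fin (Nn ν)) → H)
    (hμhat : ∀ ν s, μhat ν s = (Nhat ν s)⁻¹ • ∑ k ∈ s, (π ν k)⁻¹ • Y ν k) :
    ∃ C' : ℝ, ∀ ν, (n ν : ℝ) *
        ∑ s : Finset (Fin (Nn ν)), p ν s * ‖μp ν - μhat ν s‖ ^ 2 ≤ C' :=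
  mean_curve_estimator_consistent_general Nn n Y p hp0 hp1 hsize π hπ πd hπd C hA1 π₀ hπ₀ hA2 lam
    hlam hA3a CΔ hA3c Nhat hNhat μp hμp μhat hμhat
end
end

section
/- Under assumptions (A1), (A2) and (A3), the substitution estimator Γ̂_ν = (1/N̂_ν) ∑_{k∈s_ν} (Y_{k,ν} ⊗ Y_{k,ν})/π_{k,ν} − μ̂_ν ⊗ μ̂_ν of the covariance operator Γ_ν = (1/N_ν) ∑_{k∈U_ν} (Y_{k,ν} − μ_ν) ⊗ (Y_{k,ν} − μ_ν) satisfies E_{p_ν} ‖Γ_ν − Γ̂_ν‖₂² = O(1/n_ν) in Hilbert–Schmidt norm; that is, there exists a constant C′ such that for all ν, n_ν · E_{p_ν} ‖Γ_ν − Γ̂_ν‖₂² ≤ C′. In particular Γ̂_ν is asymptotically design unbiased and consistent. -/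
/-!
Both `Γ` and `Γ̂` are a weighted mean of the `Y_k ⊗ Y_k` minus the tensor square of the
corresponding weighted mean of the `Y_k` (weights `1/N`, resp. the Hájek weights `1/π_k` on the
sample). Hence `Γ - Γ̂` is the error of the Hájek mean of the vectors `Y_k ⊗ Y_k` plus
`μ̂ ⊗ μ̂ - μ ⊗ μ`, whose norm is at most `2C ‖μ - μ̂‖`. Identifying an operator `T` with the
sequence `(T e_i)_i ∈ ℓ²(ℕ, H)` makes the Hilbert–Schmidt norm a Hilbert space norm, so both
terms are errors of Hájek means of bounded vectors.

For such vectors `x_k` with centred versions `z_k = x_k - x̄`, a sample of size `n` has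
`N̂ ≥ n` (as `π_k ≤ 1`), so the error is at most `n⁻¹ ‖∑_{k ∈ s} z_k / π_k‖`. Since
`∑_k z_k = 0`, the design expectation of its square is
`∑_{k,l} Δ_{kl} ⟪z_k, z_l⟫ / (π_k π_l)`, which (A3) bounds by `O(N + N²/n)`. So `n` times the
mean squared error is `O(N/n + (N/n)²)`, which (A2) bounds.
-/

open scoped RealInnerProductSpace
open Filter Topology

noncomputable section

/-- The rank-one operator `a ⊗ b : u ↦ ⟪a, u⟫ • b`. -/
def tens {H : Type*} [NormedAddCommGroup H] [InnerProductSpace ℝ H] (a b : H) :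
    H →L[ℝ] H := (innerSL ℝ a).smulRight b

/-- The squared Hilbert–Schmidt norm of an operator on `H`, computed in the Hilbert basis
`e`. -/
def hsNormSq {H : Type*} [NormedAddCommGroup H] [InnerProductSpace ℝ H] [CompleteSpace H]
    (e : HilbertBasis ℕ ℝ H) (T : H →L[ℝ] H) : ℝ := ∑' i, ‖T (e i)‖ ^ 2

open Finset

section Design

variable {ι : Type*} [Fintype ι] [DecidableEq ι]

def inclProb (p : Finset ι → ℝ) (k : ι) : ℝ := ∑ s, if k ∈ s then p s else 0

def jointInclProb (p : Finset ι → ℝ) (k l : ι) : ℝ := ∑ s, if k ∈ s ∧ l ∈ s then p s else 0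

variable {p : Finset ι → ℝ}

lemma inclProb_nonneg (hp0 : ∀ s, 0 ≤ p s) (k : ι) : 0 ≤ inclProb p k :=
  sum_nonneg fun s _ => by split_ifs <;> simp [hp0]

lemma inclProb_le_one (hp0 : ∀ s, 0 ≤ p s) (hp1 : ∑ s, p s = 1) (k : ι) :
    inclProb p k ≤ 1 :=
  hp1 ▸ sum_le_sum fun s _ => by split_ifs <;> simp [hp0]

lemma jointInclProb_self (k : ι) : jointInclProb p k k = inclProb p k := by
  simp [jointInclProb, inclProb]

lemma sum_mul_sum_sum_eq_sum_sum_jointInclProb_mul (f : ι → ι → ℝ) :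
    ∑ s, p s * ∑ k ∈ s, ∑ l ∈ s, f k l = ∑ k, ∑ l, jointInclProb p k l * f k l := by
  have hsample : ∀ s : Finset ι, ∑ k ∈ s, ∑ l ∈ s, f k l
      = ∑ k, ∑ l, if k ∈ s ∧ l ∈ s then f k l else 0 := by
    intro s
    simp [ite_and]
  simp_rw [hsample, mul_sum, jointInclProb, sum_mul, ite_mul, zero_mul, mul_ite, mul_zero]
  rw [sum_comm]
  exact sum_congr rfl fun k _ => sum_comm

lemma norm_sum_sq_eq_sum_sum_inner_s10 {E : Type*} [NormedAddCommGroup E] [InnerProductSpace ℝ E]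
    {κ : Type*} (t : Finset κ) (v : κ → E) :
    ‖∑ k ∈ t, v k‖ ^ 2 = ∑ k ∈ t, ∑ l ∈ t, ⟪v k, v l⟫ := by
  simp_rw [← real_inner_self_eq_norm_sq, sum_inner, inner_sum]

lemma sum_mul_norm_sq_sum_smul_eq {E : Type*} [NormedAddCommGroup E] [InnerProductSpace ℝ E]
    (w : ι → ℝ) (z : ι → E) :
    ∑ s, p s * ‖∑ k ∈ s, w k • z k‖ ^ 2 =
      ∑ k, ∑ l, (jointInclProb p k l - inclProb p k * inclProb p l) * (w k * w l * ⟪z k, z l⟫)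
        + ‖∑ k, (inclProb p k * w k) • z k‖ ^ 2 := by
  simp_rw [norm_sum_sq_eq_sum_sum_inner_s10, real_inner_smul_left, real_inner_smul_right,
    sum_mul_sum_sum_eq_sum_sum_jointInclProb_mul, ← sum_add_distrib]
  exact sum_congr rfl fun k _ => sum_congr rfl fun l _ => by ring

lemma sum_sum_abs_jointInclProb_sub_le (hp0 : ∀ s, 0 ≤ p s) (hp1 : ∑ s, p s = 1) {δ : ℝ}
    (hδ : 0 ≤ δ) (hΔ : ∀ k l, k ≠ l → |jointInclProb p k l - inclProb p k * inclProb p l| ≤ δ) :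
    ∑ k, ∑ l, |jointInclProb p k l - inclProb p k * inclProb p l|
      ≤ Fintype.card ι + Fintype.card ι ^ 2 * δ := by
  have hterm : ∀ k l, |jointInclProb p k l - inclProb p k * inclProb p l|
      ≤ (if k = l then 1 else 0) + δ := by
    intro k l
    split_ifs with hkl
    · subst hkl
      have h0 := inclProb_nonneg hp0 k
      have h1 := inclProb_le_one hp0 hp1 k
      rw [jointInclProb_self, abs_le]
      constructor <;> nlinarith
    · simpa using hΔ k l hkl
  calc _ ≤ ∑ k : ι, ∑ l : ι, ((if k = l then 1 else 0) + δ) :=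
        sum_le_sum fun k _ => sum_le_sum fun l _ => hterm k l
    _ = _ := by simp [sum_add_distrib, sq]; ring

end Design

section Mean

variable {ι : Type*} [Fintype ι]

def popMean {E : Type*} [AddCommGroup E] [Module ℝ E] (x : ι → E) : E :=
  (Fintype.card ι : ℝ)⁻¹ • ∑ k, x k

section Module

variable {E : Type*} [AddCommGroup E] [Module ℝ E]

lemma popMean_eq_centerMass (x : ι → E) : popMean x = univ.centerMass (fun _ => (1 : ℝ)) x := by
  simp [popMean, Finset.centerMass]

lemma sum_sub_popMean (x : ι → E) : ∑ k, (x k - popMean x) = 0 := by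
  rcases isEmpty_or_nonempty ι with _ | _
  · simp
  · rw [sum_sub_distrib, sum_const, card_univ, popMean, ← Nat.cast_smul_eq_nsmul ℝ, smul_smul,
      mul_inv_cancel₀ (by positivity), one_smul, sub_self]

lemma popMean_bilin_centered {F : Type*} [AddCommGroup F] [Module ℝ F]
    (B : E →ₗ[ℝ] E →ₗ[ℝ] F) (x : ι → E) :
    popMean (fun k => B (x k - popMean x) (x k - popMean x))
      = popMean (fun k => B (x k) (x k)) - B (popMean x) (popMean x) := by
  set m := popMean x
  rcases isEmpty_or_nonempty ι with _ | _
  · simp [m, popMean]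
  have hcross : ∑ k, (B (x k - m) m + B m (x k - m)) = 0 := by
    simp only [sum_add_distrib, ← LinearMap.sum_apply, ← map_sum, m, sum_sub_popMean, map_zero,
      LinearMap.zero_apply, add_zero]
  have hexpand : ∀ k, B (x k - m) (x k - m)
      = B (x k) (x k) - B m m - (B (x k - m) m + B m (x k - m)) := by
    intro k
    simp only [map_sub, LinearMap.sub_apply]
    abel
  simp only [popMean, hexpand, sum_sub_distrib, hcross, sum_const, card_univ, smul_sub]
  rw [← Nat.cast_smul_eq_nsmul ℝ, smul_smul, inv_mul_cancel₀ (by positivity), one_smul, smul_zero,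
    sub_zero]

lemma popMean_sub_centerMass (x : ι → E) {s : Finset ι} {w : ι → ℝ}
    (hw : ∑ k ∈ s, w k ≠ 0) :
    popMean x - s.centerMass w x = -s.centerMass w (fun k => x k - popMean x) := by
  simp only [Finset.centerMass, smul_sub, sum_sub_distrib, ← sum_smul, smul_smul,
    inv_mul_cancel₀ hw, one_smul]
  abel

end Module

variable {E : Type*} [SeminormedAddCommGroup E] [NormedSpace ℝ E]

omit [Fintype ι] in
lemma norm_centerMass_le {s : Finset ι} {w : ι → ℝ} (hw : ∀ k ∈ s, 0 ≤ w k)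
    (hws : 0 < ∑ k ∈ s, w k) {x : ι → E} {M : ℝ} (hx : ∀ k ∈ s, ‖x k‖ ≤ M) :
    ‖s.centerMass w x‖ ≤ M := by
  simpa using (convex_closedBall (0 : E) M).centerMass_mem hw hws (by simpa using hx)

lemma norm_popMean_le [Nonempty ι] {x : ι → E} {M : ℝ} (hx : ∀ k, ‖x k‖ ≤ M) :
    ‖popMean x‖ ≤ M := by
  rw [popMean_eq_centerMass]
  exact norm_centerMass_le (by simp) (by simp [Fintype.card_pos]) (by simpa using hx)

lemma norm_popMean_sub_centerMass_le (x : ι → E) {s : Finset ι} {w : ι → ℝ}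
    (hw : ∀ k ∈ s, 1 ≤ w k) (hs : 0 < #s) :
    ‖popMean x - s.centerMass w x‖ ≤ ‖∑ k ∈ s, w k • (x k - popMean x)‖ / #s := by
  have hcard : (#s : ℝ) ≤ ∑ k ∈ s, w k := by simpa using sum_le_sum hw
  have hpos : (0 : ℝ) < #s := by exact_mod_cast hs
  rw [popMean_sub_centerMass x (hpos.trans_le hcard).ne', norm_neg, Finset.centerMass, norm_smul,
    Real.norm_of_nonneg (inv_nonneg.mpr (hpos.le.trans hcard)), div_eq_inv_mul]
  gcongr

end Mean

section Hajek

variable {ι : Type*} [Fintype ι] [DecidableEq ι] {E : Type*} [NormedAddCommGroup E]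
  [InnerProductSpace ℝ E] {p : Finset ι → ℝ}

lemma sum_mul_norm_sq_sum_inv_inclProb_smul_le (hp0 : ∀ s, 0 ≤ p s) (hp1 : ∑ s, p s = 1)
    {lam : ℝ} (hlam : 0 < lam) (hπ : ∀ k, lam ≤ inclProb p k) {δ : ℝ} (hδ : 0 ≤ δ)
    (hΔ : ∀ k l, k ≠ l → |jointInclProb p k l - inclProb p k * inclProb p l| ≤ δ)
    {z : ι → E} (hz0 : ∑ k, z k = 0) {R : ℝ} (hz : ∀ k, ‖z k‖ ≤ R) :
    ∑ s, p s * ‖∑ k ∈ s, (inclProb p k)⁻¹ • z k‖ ^ 2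
      ≤ (R / lam) ^ 2 * (Fintype.card ι + Fintype.card ι ^ 2 * δ) := by
  have hπpos : ∀ k, 0 < inclProb p k := fun k => hlam.trans_le (hπ k)
  have hweight : ∀ k l, |(inclProb p k)⁻¹ * (inclProb p l)⁻¹ * ⟪z k, z l⟫| ≤ (R / lam) ^ 2 := by
    intro k l
    have hR : 0 ≤ R := (norm_nonneg _).trans (hz k)
    calc _ = (inclProb p k)⁻¹ * (inclProb p l)⁻¹ * |⟪z k, z l⟫| := by
          rw [abs_mul, abs_mul, abs_of_pos (inv_pos.mpr (hπpos k)),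
            abs_of_pos (inv_pos.mpr (hπpos l))]
      _ ≤ lam⁻¹ * lam⁻¹ * (R * R) := by
          have hinner : |⟪z k, z l⟫| ≤ R * R :=
            (abs_real_inner_le_norm _ _).trans (mul_le_mul (hz k) (hz l) (norm_nonneg _) hR)
          have hk := inv_anti₀ hlam (hπ k)
          have hl := inv_anti₀ hlam (hπ l)
          exact mul_le_mul (mul_le_mul hk hl (inv_pos.mpr (hπpos l)).le (inv_pos.mpr hlam).le)
            hinner (abs_nonneg _) (by positivity)
      _ = (R / lam) ^ 2 := by ring
  simp only [sum_mul_norm_sq_sum_smul_eq, mul_inv_cancel₀ (hπpos _).ne', one_smul, hz0,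
    norm_zero, ne_eq, OfNat.ofNat_ne_zero, not_false_eq_true, zero_pow, add_zero]
  calc _ ≤ ∑ k, ∑ l, |jointInclProb p k l - inclProb p k * inclProb p l| * (R / lam) ^ 2 := by
        refine sum_le_sum fun k _ => sum_le_sum fun l _ => ?_
        refine (le_abs_self _).trans ?_
        rw [abs_mul]
        exact mul_le_mul_of_nonneg_left (hweight k l) (abs_nonneg _)
    _ = (R / lam) ^ 2 * ∑ k, ∑ l, |jointInclProb p k l - inclProb p k * inclProb p l| := by
        simp_rw [← sum_mul]; ring
    _ ≤ _ := by
        gcongr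
        exact sum_sum_abs_jointInclProb_sub_le hp0 hp1 hδ hΔ

theorem sum_mul_norm_sq_popMean_sub_centerMass_le (hp0 : ∀ s, 0 ≤ p s) (hp1 : ∑ s, p s = 1)
    {n : ℕ} (hn : 0 < n) (hsize : ∀ s, p s ≠ 0 → #s = n)
    {lam : ℝ} (hlam : 0 < lam) (hπ : ∀ k, lam ≤ inclProb p k) {δ : ℝ} (hδ : 0 ≤ δ)
    (hΔ : ∀ k l, k ≠ l → |jointInclProb p k l - inclProb p k * inclProb p l| ≤ δ)
    {x : ι → E} {M : ℝ} (hx : ∀ k, ‖x k‖ ≤ M) :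
    ∑ s, p s * ‖popMean x - s.centerMass (fun k => (inclProb p k)⁻¹) x‖ ^ 2
      ≤ (2 * M / lam) ^ 2 * (Fintype.card ι + Fintype.card ι ^ 2 * δ) / n ^ 2 := by
  have hz : ∀ k, ‖x k - popMean x‖ ≤ 2 * M := fun k => by
    have : Nonempty ι := ⟨k⟩
    have := norm_popMean_le hx
    linarith [norm_sub_le (x k) (popMean x), hx k]
  have hsample : ∀ s, p s * ‖popMean x - s.centerMass (fun k => (inclProb p k)⁻¹) x‖ ^ 2
      ≤ p s * ‖∑ k ∈ s, (inclProb p k)⁻¹ • (x k - popMean x)‖ ^ 2 / n ^ 2 := by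
    intro s
    rcases eq_or_ne (p s) 0 with hs | hs
    · simp [hs]
    have hw : ∀ k ∈ s, 1 ≤ (inclProb p k)⁻¹ := fun k _ =>
      one_le_inv₀ (hlam.trans_le (hπ k)) |>.mpr (inclProb_le_one hp0 hp1 k)
    have h := norm_popMean_sub_centerMass_le x hw (hsize s hs ▸ hn)
    rw [hsize s hs] at h
    rw [mul_div_assoc, ← div_pow]
    have := hp0 s
    gcongr
  calc _ ≤ ∑ s, p s * ‖∑ k ∈ s, (inclProb p k)⁻¹ • (x k - popMean x)‖ ^ 2 / n ^ 2 :=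
        sum_le_sum fun s _ => hsample s
    _ = (∑ s, p s * ‖∑ k ∈ s, (inclProb p k)⁻¹ • (x k - popMean x)‖ ^ 2) / n ^ 2 := by
        rw [sum_div]
    _ ≤ _ := by
        gcongr
        exact sum_mul_norm_sq_sum_inv_inclProb_smul_le hp0 hp1 hlam hπ hδ hΔ
          (sum_sub_popMean x) hz

end Hajek

lemma lp.hasSum_norm_sq {κ : Type*} {G : κ → Type*} [∀ i, NormedAddCommGroup (G i)]
    [∀ i, InnerProductSpace ℝ (G i)] (f : lp G 2) : HasSum (fun i => ‖f i‖ ^ 2) (‖f‖ ^ 2) := by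
  simpa only [real_inner_self_eq_norm_sq] using lp.hasSum_inner (𝕜 := ℝ) f f

section HilbertSchmidt

variable {H : Type*} [NormedAddCommGroup H] [InnerProductSpace ℝ H]
  (e : HilbertBasis ℕ ℝ H)

lemma hasSum_norm_sq_tens_apply (a b : H) :
    HasSum (fun i => ‖tens a b (e i)‖ ^ 2) (‖a‖ ^ 2 * ‖b‖ ^ 2) := by
  have h := (e.hasSum_inner_mul_inner a a).mul_right (‖b‖ ^ 2)
  rw [real_inner_self_eq_norm_sq] at h
  refine h.congr_fun fun i => ?_
  rw [tens, ContinuousLinearMap.smulRight_apply, innerSL_apply_apply, norm_smul,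
    Real.norm_eq_abs, mul_pow, sq_abs, real_inner_comm (e i), sq]

def tensCoords : H →ₗ[ℝ] H →ₗ[ℝ] lp (fun _ : ℕ => H) 2 :=
  LinearMap.mk₂ ℝ
    (fun a b => ⟨fun i => tens a b (e i), memℓp_gen <| by
      simpa only [ENNReal.toReal_ofNat, Real.rpow_two]
        using (hasSum_norm_sq_tens_apply e a b).summable⟩)
    (fun a a' b => lp.ext <| funext fun i => by
      simp only [lp.coeFn_add, Pi.add_apply]; simp [tens, add_smul])
    (fun c a b => lp.ext <| funext fun i => by
      simp only [lp.coeFn_smul, Pi.smul_apply]; simp [tens, mul_smul])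
    (fun a b b' => lp.ext <| funext fun i => by
      simp only [lp.coeFn_add, Pi.add_apply]; simp [tens])
    (fun c a b => lp.ext <| funext fun i => by
      simp only [lp.coeFn_smul, Pi.smul_apply]; simp [tens, smul_comm c])

lemma tensCoords_apply (a b : H) (i : ℕ) : tensCoords e a b i = tens a b (e i) := rfl

lemma norm_tensCoords (a b : H) : ‖tensCoords e a b‖ = ‖a‖ * ‖b‖ := by
  have h := (lp.hasSum_norm_sq (tensCoords e a b)).unique (hasSum_norm_sq_tens_apply e a b)
  rw [← mul_pow] at h
  exact (sq_eq_sq₀ (norm_nonneg _) (by positivity)).mp h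

lemma norm_tensCoords_self_sub_self_le (a b : H) :
    ‖tensCoords e a a - tensCoords e b b‖ ≤ (‖a‖ + ‖b‖) * ‖a - b‖ := by
  have h : tensCoords e a a - tensCoords e b b
      = tensCoords e a (a - b) + tensCoords e (a - b) b := by
    simp only [map_sub, LinearMap.sub_apply]
    abel
  calc _ ≤ ‖tensCoords e a (a - b)‖ + ‖tensCoords e (a - b) b‖ := h ▸ norm_add_le _ _
    _ = (‖a‖ + ‖b‖) * ‖a - b‖ := by rw [norm_tensCoords, norm_tensCoords]; ring

lemma hsNormSq_eq_norm_sq [CompleteSpace H] {T : H →L[ℝ] H} {v : lp (fun _ : ℕ => H) 2}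
    (h : ∀ i, T (e i) = v i) :
    hsNormSq e T = ‖v‖ ^ 2 := by
  simp_rw [hsNormSq, h]
  exact (lp.hasSum_norm_sq v).tsum_eq

end HilbertSchmidt

section Covariance

variable {ι : Type*} [Fintype ι] {H : Type*} [NormedAddCommGroup H] [InnerProductSpace ℝ H]

def popCov (Y : ι → H) : H →L[ℝ] H :=
  popMean fun k => tens (Y k - popMean Y) (Y k - popMean Y)

def hajekCov (w : ι → ℝ) (Y : ι → H) (s : Finset ι) : H →L[ℝ] H :=
  s.centerMass w (fun k => tens (Y k) (Y k)) - tens (s.centerMass w Y) (s.centerMass w Y)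

variable [CompleteSpace H] (e : HilbertBasis ℕ ℝ H)

lemma hsNormSq_popCov_sub_hajekCov (Y : ι → H) (w : ι → ℝ) (s : Finset ι) :
    hsNormSq e (popCov Y - hajekCov w Y s) =
      ‖(popMean (fun k => tensCoords e (Y k) (Y k))
          - s.centerMass w (fun k => tensCoords e (Y k) (Y k)))
        + (tensCoords e (s.centerMass w Y) (s.centerMass w Y)
          - tensCoords e (popMean Y) (popMean Y))‖ ^ 2 := by
  rw [hsNormSq_eq_norm_sq e
    (v := popMean (fun k => tensCoords e (Y k - popMean Y) (Y k - popMean Y))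
      - (s.centerMass w (fun k => tensCoords e (Y k) (Y k))
        - tensCoords e (s.centerMass w Y) (s.centerMass w Y)))]
  · rw [popMean_bilin_centered]
    congr 2
    abel
  · intro i
    simp only [popCov, hajekCov, popMean, Finset.centerMass, sub_apply, smul_apply,
      _root_.sum_apply, lp.coeFn_sub, lp.coeFn_smul, lp.coeFn_sum, Pi.sub_apply, Pi.smul_apply,
      Finset.sum_apply, tensCoords_apply]

lemma hsNormSq_popCov_sub_hajekCov_le {Y : ι → H} {C : ℝ} (hY : ∀ k, ‖Y k‖ ≤ C) {w : ι → ℝ}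
    {s : Finset ι} (hw : ∀ k ∈ s, 0 < w k) (hs : s.Nonempty) :
    hsNormSq e (popCov Y - hajekCov w Y s) ≤
      2 * ‖popMean (fun k => tensCoords e (Y k) (Y k))
          - s.centerMass w (fun k => tensCoords e (Y k) (Y k))‖ ^ 2
        + 8 * C ^ 2 * ‖popMean Y - s.centerMass w Y‖ ^ 2 := by
  have : Nonempty ι := ⟨hs.choose⟩
  have hmean : ‖popMean Y‖ ≤ C := norm_popMean_le hY
  have hhajek : ‖s.centerMass w Y‖ ≤ C :=
    norm_centerMass_le (fun k hk => (hw k hk).le) (sum_pos hw hs) fun k _ => hY k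
  have htens := norm_tensCoords_self_sub_self_le e (s.centerMass w Y) (popMean Y)
  rw [norm_sub_rev (s.centerMass w Y)] at htens
  rw [hsNormSq_popCov_sub_hajekCov]
  set a := popMean (fun k => tensCoords e (Y k) (Y k))
    - s.centerMass w (fun k => tensCoords e (Y k) (Y k))
  set b := tensCoords e (s.centerMass w Y) (s.centerMass w Y)
    - tensCoords e (popMean Y) (popMean Y)
  have hb : ‖b‖ ≤ 2 * C * ‖popMean Y - s.centerMass w Y‖ := by
    refine htens.trans ?_
    gcongr
    linarith
  calc ‖a + b‖ ^ 2 ≤ (‖a‖ + ‖b‖) ^ 2 := by gcongr; exact norm_add_le a b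
    _ ≤ 2 * (‖a‖ ^ 2 + ‖b‖ ^ 2) := add_sq_le
    _ ≤ 2 * (‖a‖ ^ 2 + (2 * C * ‖popMean Y - s.centerMass w Y‖) ^ 2) := by gcongr
    _ = _ := by ring

theorem mul_sum_mul_hsNormSq_popCov_sub_hajekCov_le [DecidableEq ι] {p : Finset ι → ℝ}
    (hp0 : ∀ s, 0 ≤ p s) (hp1 : ∑ s, p s = 1) {n : ℕ} (hn : 0 < n)
    (hsize : ∀ s, p s ≠ 0 → #s = n) {lam : ℝ} (hlam : 0 < lam) (hπ : ∀ k, lam ≤ inclProb p k)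
    {D : ℝ} (hD : 0 ≤ D)
    (hΔ : ∀ k l, k ≠ l → n * |jointInclProb p k l - inclProb p k * inclProb p l| ≤ D)
    {Y : ι → H} {C : ℝ} (hY : ∀ k, ‖Y k‖ ≤ C) :
    n * ∑ s, p s * hsNormSq e (popCov Y - hajekCov (fun k => (inclProb p k)⁻¹) Y s)
      ≤ 40 * C ^ 4 / lam ^ 2 * (Fintype.card ι / n + (Fintype.card ι / n) ^ 2 * D) := by
  have hnR : (0 : ℝ) < n := by exact_mod_cast hn
  have hδ : ∀ k l, k ≠ l → |jointInclProb p k l - inclProb p k * inclProb p l| ≤ D / n :=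
    fun k l hkl => (le_div_iff₀' hnR).mpr (hΔ k l hkl)
  set w := fun k => (inclProb p k)⁻¹
  set X := fun k => tensCoords e (Y k) (Y k)
  have hX : ∀ k, ‖X k‖ ≤ C ^ 2 := fun k => by
    rw [norm_tensCoords, ← sq]
    exact pow_le_pow_left₀ (norm_nonneg _) (hY k) 2
  have hsample : ∀ s, p s * hsNormSq e (popCov Y - hajekCov w Y s)
      ≤ 2 * (p s * ‖popMean X - s.centerMass w X‖ ^ 2)
        + 8 * C ^ 2 * (p s * ‖popMean Y - s.centerMass w Y‖ ^ 2) := by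
    intro s
    rcases eq_or_ne (p s) 0 with hs | hs
    · simp [hs]
    have hne : s.Nonempty := card_pos.mp (hsize s hs ▸ hn)
    have hw : ∀ k ∈ s, 0 < w k := fun k _ => inv_pos.mpr (hlam.trans_le (hπ k))
    have := mul_le_mul_of_nonneg_left (hsNormSq_popCov_sub_hajekCov_le e hY hw hne) (hp0 s)
    linarith
  have hDn : 0 ≤ D / n := by positivity
  have hEX := sum_mul_norm_sq_popMean_sub_centerMass_le hp0 hp1 hn hsize hlam hπ hDn hδ hX
  have hEY := sum_mul_norm_sq_popMean_sub_centerMass_le hp0 hp1 hn hsize hlam hπ hDn hδ hY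
  have hE := sum_le_sum fun s (_ : s ∈ univ) => hsample s
  rw [sum_add_distrib, ← mul_sum, ← mul_sum] at hE
  calc
    _ ≤ (n : ℝ) * (2 * ((2 * C ^ 2 / lam) ^ 2 * (Fintype.card ι + Fintype.card ι ^ 2 * (D / n))
          / n ^ 2) + 8 * C ^ 2 * ((2 * C / lam) ^ 2 * (Fintype.card ι + Fintype.card ι ^ 2 * (D / n))
          / n ^ 2)) := by
      gcongr
      exact hE.trans (by gcongr)
    _ = _ := by
      field_simp
      ring

end Covariance

theorem covariance_operator_estimator_consistent_general
    {H : Type*} [NormedAddCommGroup H] [InnerProductSpace ℝ H] [CompleteSpace H]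
    (e : HilbertBasis ℕ ℝ H)
    (Nn n : ℕ → ℕ)
    (Y : (ν : ℕ) → Fin (Nn ν) → H)
    (p : (ν : ℕ) → Finset (Fin (Nn ν)) → ℝ)
    (hp0 : ∀ ν s, 0 ≤ p ν s)
    (hp1 : ∀ ν, ∑ s : Finset (Fin (Nn ν)), p ν s = 1)
    (hsize : ∀ ν s, p ν s ≠ 0 → s.card = n ν)
    (π : (ν : ℕ) → Fin (Nn ν) → ℝ)
    (hπ : ∀ ν k, π ν k = ∑ s : Finset (Fin (Nn ν)), (if k ∈ s then p ν s else 0))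
    (πd : (ν : ℕ) → Fin (Nn ν) → Fin (Nn ν) → ℝ)
    (hπd : ∀ ν k l, πd ν k l = ∑ s : Finset (Fin (Nn ν)), (if k ∈ s ∧ l ∈ s then p ν s else 0))
    -- (A1)
    (C : ℝ) (hA1 : ∀ ν k, ‖Y ν k‖ ≤ C)
    -- (A2)
    (π₀ : ℝ) (hπ₀ : π₀ ∈ Set.Ioo (0 : ℝ) 1)
    (hA2 : Tendsto (fun ν => (n ν : ℝ) / (Nn ν : ℝ)) atTop (𝓝 π₀))
    -- (A3)
    (lam : ℝ) (hlam : 0 < lam)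
    (hA3a : ∀ ν k, lam ≤ π ν k)
    (CΔ : ℝ)
    (hA3c : ∀ ν (k l : Fin (Nn ν)), k ≠ l → (n ν : ℝ) * |πd ν k l - π ν k * π ν l| ≤ CΔ)
    -- population parameters and their substitution estimators
    (μp : (ν : ℕ) → H) (hμp : ∀ ν, μp ν = (Nn ν : ℝ)⁻¹ • ∑ k, Y ν k)
    (Γp : (ν : ℕ) → H →L[ℝ] H)
    (hΓp : ∀ ν, Γp ν = (Nn ν : ℝ)⁻¹ • ∑ k, tens (Y ν k - μp ν) (Y ν k - μp ν))
    (Nhat : (ν : ℕ) → Finset (Fin (Nn ν)) → ℝ)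
    (hNhat : ∀ ν s, Nhat ν s = ∑ k ∈ s, (π ν k)⁻¹)
    (μhat : (ν : ℕ) → Finset (Fin (Nn ν)) → H)
    (hμhat : ∀ ν s, μhat ν s = (Nhat ν s)⁻¹ • ∑ k ∈ s, (π ν k)⁻¹ • Y ν k)
    (Γhat : (ν : ℕ) → Finset (Fin (Nn ν)) → H →L[ℝ] H)
    (hΓhat : ∀ ν s, Γhat ν s = (Nhat ν s)⁻¹ • (∑ k ∈ s, (π ν k)⁻¹ • tens (Y ν k) (Y ν k))
        - tens (μhat ν s) (μhat ν s)) :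
    ∃ C' : ℝ, ∀ ν, (n ν : ℝ) *
        ∑ s : Finset (Fin (Nn ν)), p ν s * hsNormSq e (Γp ν - Γhat ν s) ≤ C' := by
  obtain ⟨K, hK⟩ : ∃ K, ∀ ν, (Nn ν : ℝ) / n ν ≤ K := by
    obtain ⟨K, hK⟩ := (hA2.inv₀ hπ₀.1.ne').bddAbove_range
    exact ⟨K, fun ν => by simpa only [inv_div] using hK ⟨ν, rfl⟩⟩
  have hK0 : 0 ≤ K := (div_nonneg (Nat.cast_nonneg _) (Nat.cast_nonneg _)).trans (hK 0)
  refine ⟨40 * C ^ 4 / lam ^ 2 * (K + K ^ 2 * |CΔ|), fun ν => ?_⟩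
  rcases (n ν).eq_zero_or_pos with hn0 | hn
  · rw [hn0, Nat.cast_zero, zero_mul]
    positivity
  have hπν : π ν = inclProb (p ν) := funext (hπ ν)
  have hμ : μp ν = popMean (Y ν) := by rw [hμp, popMean, Fintype.card_fin]
  have hΓ : ∀ s, Γp ν - Γhat ν s = popCov (Y ν) - hajekCov (fun k => (π ν k)⁻¹) (Y ν) s := by
    intro s
    rw [hΓp, hΓhat, hμhat, hNhat, popCov, ← hμ, popMean, Fintype.card_fin]
    rfl
  have hΔ : ∀ k l, k ≠ l →
      n ν * |jointInclProb (p ν) k l - inclProb (p ν) k * inclProb (p ν) l| ≤ |CΔ| := by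
    intro k l hkl
    rw [← hπν, jointInclProb, ← hπd]
    exact (hA3c ν k l hkl).trans (le_abs_self _)
  have hbound := mul_sum_mul_hsNormSq_popCov_sub_hajekCov_le e (hp0 ν) (hp1 ν) hn (hsize ν) hlam
    (hπν ▸ hA3a ν) (abs_nonneg CΔ) hΔ (hA1 ν)
  rw [Fintype.card_fin, ← hπν] at hbound
  simp_rw [hΓ]
  refine hbound.trans ?_
  have := div_nonneg (Nat.cast_nonneg (α := ℝ) (Nn ν)) (Nat.cast_nonneg (n ν))
  have := hK ν
  gcongr

/-- Under (A1), (A2), (A3), the substitution estimator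
`Γ̂_ν = (1/N̂_ν) ∑_{k∈s_ν} (Y_{k,ν} ⊗ Y_{k,ν})/π_{k,ν} − μ̂_ν ⊗ μ̂_ν` of the covariance
operator `Γ_ν` satisfies `E_{p_ν} ‖Γ_ν − Γ̂_ν‖₂² = O(1/n_ν)` in Hilbert–Schmidt norm. -/
theorem covariance_operator_estimator_consistent
    {H : Type*} [NormedAddCommGroup H] [InnerProductSpace ℝ H] [CompleteSpace H]
    (e : HilbertBasis ℕ ℝ H)
    (Nn n : ℕ → ℕ) (hNpos : ∀ ν, 0 < Nn ν) (hNmono : StrictMono Nn)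
    (hn : Tendsto n atTop atTop)
    (Y : (ν : ℕ) → Fin (Nn ν) → H)
    (p : (ν : ℕ) → Finset (Fin (Nn ν)) → ℝ)
    (hp0 : ∀ ν s, 0 ≤ p ν s)
    (hp1 : ∀ ν, ∑ s : Finset (Fin (Nn ν)), p ν s = 1)
    (hsize : ∀ ν s, p ν s ≠ 0 → s.card = n ν)
    (π : (ν : ℕ) → Fin (Nn ν) → ℝ)
    (hπ : ∀ ν k, π ν k = ∑ s : Finset (Fin (Nn ν)), (if k ∈ s then p ν s else 0))
    (πd : (ν : ℕ) → Fin (Nn ν) → Fin (Nn ν) → ℝ)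
    (hπd : ∀ ν k l, πd ν k l = ∑ s : Finset (Fin (Nn ν)), (if k ∈ s ∧ l ∈ s then p ν s else 0))
    -- (A1)
    (C : ℝ) (hA1 : ∀ ν k, ‖Y ν k‖ ≤ C)
    -- (A2)
    (π₀ : ℝ) (hπ₀ : π₀ ∈ Set.Ioo (0 : ℝ) 1)
    (hA2 : Tendsto (fun ν => (n ν : ℝ) / (Nn ν : ℝ)) atTop (𝓝 π₀))
    -- (A3)
    (lam lamStar : ℝ) (hlam : 0 < lam) (hlamStar : 0 < lamStar)
    (hA3a : ∀ ν k, lam ≤ π ν k)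
    (hA3b : ∀ ν k l, k ≠ l → lamStar ≤ πd ν k l)
    (CΔ : ℝ)
    (hA3c : ∀ ν (k l : Fin (Nn ν)), k ≠ l → (n ν : ℝ) * |πd ν k l - π ν k * π ν l| ≤ CΔ)
    -- population parameters and their substitution estimators
    (μp : (ν : ℕ) → H) (hμp : ∀ ν, μp ν = (Nn ν : ℝ)⁻¹ • ∑ k, Y ν k)
    (Γp : (ν : ℕ) → H →L[ℝ] H)
    (hΓp : ∀ ν, Γp ν = (Nn ν : ℝ)⁻¹ • ∑ k, tens (Y ν k - μp ν) (Y ν k - μp ν))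
    (Nhat : (ν : ℕ) → Finset (Fin (Nn ν)) → ℝ)
    (hNhat : ∀ ν s, Nhat ν s = ∑ k ∈ s, (π ν k)⁻¹)
    (μhat : (ν : ℕ) → Finset (Fin (Nn ν)) → H)
    (hμhat : ∀ ν s, μhat ν s = (Nhat ν s)⁻¹ • ∑ k ∈ s, (π ν k)⁻¹ • Y ν k)
    (Γhat : (ν : ℕ) → Finset (Fin (Nn ν)) → H →L[ℝ] H)
    (hΓhat : ∀ ν s, Γhat ν s = (Nhat ν s)⁻¹ • (∑ k ∈ s, (π ν k)⁻¹ • tens (Y ν k) (Y ν k))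
        - tens (μhat ν s) (μhat ν s)) :
    ∃ C' : ℝ, ∀ ν, (n ν : ℝ) *
        ∑ s : Finset (Fin (Nn ν)), p ν s * hsNormSq e (Γp ν - Γhat ν s) ≤ C' :=
  covariance_operator_estimator_consistent_general e Nn n Y p hp0 hp1 hsize π hπ πd hπd C hA1 π₀ hπ₀
    hA2 lam hlam hA3a CΔ hA3c μp hμp Γp hΓp Nhat hNhat μhat hμhat Γhat hΓhat
end
end

section
/- Fix y ∈ H and define, for real h near 0, the perturbed covariance operator Γ(h) = (1/(N+h)) (∑_{k∈U} Y_k ⊗ Y_k + h·(y ⊗ y)) − μ(h) ⊗ μ(h) with μ(h) = (1/(N+h)) (∑_{k∈U} Y_k + h·y). Let λ_j be an eigenvalue of Γ with unit eigenvector v_j, and suppose h ↦ λ(h) ∈ ℝ and h ↦ w(h) ∈ H are defined near 0 with λ(0) = λ_j, w(0) = v_j, ‖w(h)‖ = 1 and Γ(h) w(h) = λ(h) w(h) for all h near 0, and that w is differentiable at 0. Then λ is differentiable at h = 0 with derivative λ′(0) = (1/N)(⟨y − μ, v_j⟩² − λ_j); that is, the influence function of the eigenvalue λ_j is Iλ_j(M,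 y) = (1/N)(⟨y − μ, v_j⟩² − λ_j). -/
/-!
Along the eigenvector path `λ(h) = ⟪w(h), Γ(h) w(h)⟫`. Differentiating at `0`, the two terms
containing `w'(0)` cancel (Hellmann–Feynman): `Γ` is symmetric and `‖w‖ = 1` forces
`w'(0) ⊥ v_j`. Hence `λ'(0) = ⟪v_j, Γ'(0) v_j⟫`. Since `∑ Yₖ ⊗ Yₖ = N (Γ + μ ⊗ μ)`, `Γ(h)` is
the covariance of the population with an extra mass `h` at `y`, and
`Γ'(0) = N⁻¹ ((y - μ) ⊗ (y - μ) - Γ)`.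
-/

open scoped RealInnerProductSpace
open Filter Topology

noncomputable section

section Tens

variable {H : Type*} [NormedAddCommGroup H] [InnerProductSpace ℝ H]

@[simp]
lemma tens_apply (a b u : H) : tens a b u = ⟪a, u⟫ • b := rfl

lemma isSymmetric_tens_self (a : H) : (tens a a : H →ₗ[ℝ] H).IsSymmetric := by
  intro u v
  simp only [ContinuousLinearMap.coe_coe, tens_apply, real_inner_smul_left,
    real_inner_smul_right, real_inner_comm a]
  ring

lemma inner_tens_self_apply (a v : H) : ⟪v, tens a a v⟫ = ⟪a, v⟫ ^ 2 := by
  rw [tens_apply, real_inner_smul_right, real_inner_comm, sq]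

theorem HasDerivAt.tens {a b : ℝ → H} {a' b' : H} {t : ℝ} (ha : HasDerivAt a a' t)
    (hb : HasDerivAt b b' t) :
    HasDerivAt (fun h => tens (a h) (b h)) (tens a' (b t) + tens (a t) b') t := by
  let T : H →L[ℝ] H →L[ℝ] H →L[ℝ] H := (ContinuousLinearMap.smulRightL ℝ H H).comp (innerSL ℝ)
  have hTa : HasDerivAt (fun h => T (a h)) (T a') t :=
    HasFDerivAt.comp_hasDerivAt (l := T) t (T.hasFDerivAt (E := H) (𝕜 := ℝ)) ha
  exact hTa.clm_apply hb

lemma sum_tens_sub_mean {ι : Type*} [Fintype ι] (Y : ι → H) {μ : H}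
    (hμ : ∑ k, Y k = (Fintype.card ι : ℝ) • μ) :
    ∑ k, tens (Y k - μ) (Y k - μ) = ∑ k, tens (Y k) (Y k) - (Fintype.card ι : ℝ) • tens μ μ := by
  ext u
  have hinner : ∑ k, ⟪Y k, u⟫ = (Fintype.card ι : ℝ) * ⟪μ, u⟫ := by
    rw [← sum_inner, hμ, real_inner_smul_left]
  simp only [sum_apply, sub_apply, smul_apply, tens_apply, inner_sub_left, sub_smul, smul_sub,
    Finset.sum_sub_distrib, ← Finset.smul_sum, ← Finset.sum_smul, hinner, hμ, Finset.sum_const,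
    Finset.card_univ]
  module

end Tens

section Contamination

lemma hasDerivAt_contaminated_mean {F : Type*} [NormedAddCommGroup F] [NormedSpace ℝ F]
    {c : ℝ} (hc : c ≠ 0) (m b : F) :
    HasDerivAt (fun h : ℝ => (c + h)⁻¹ • (c • m + h • b)) (c⁻¹ • (b - m)) 0 := by
  have hinv : HasDerivAt (fun h : ℝ => (c + h)⁻¹) (-1 / (c + 0) ^ 2) 0 :=
    ((hasDerivAt_id (0 : ℝ)).const_add c).inv (by simpa using hc)
  have hlin : HasDerivAt (fun h : ℝ => c • m + h • b) b 0 := by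
    simpa using ((hasDerivAt_id (0 : ℝ)).smul_const b).const_add (c • m)
  refine (hinv.smul hlin).congr_deriv ?_
  simp only [add_zero, zero_smul]
  match_scalars <;> field_simp

variable {H : Type*} [NormedAddCommGroup H] [InnerProductSpace ℝ H]

theorem hasDerivAt_contaminated_covariance {n : ℝ} (hn : n ≠ 0) (μ y : H) (Γ : H →L[ℝ] H) :
    HasDerivAt (fun h : ℝ => (n + h)⁻¹ • (n • (Γ + tens μ μ) + h • tens y y)
        - tens ((n + h)⁻¹ • (n • μ + h • y)) ((n + h)⁻¹ • (n • μ + h • y)))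
      (n⁻¹ • (tens (y - μ) (y - μ) - Γ)) 0 := by
  have hm := hasDerivAt_contaminated_mean hn μ y
  have hm0 : (n + 0)⁻¹ • (n • μ + (0 : ℝ) • y) = μ := by simp [hn]
  refine ((hasDerivAt_contaminated_mean hn (Γ + tens μ μ) (tens y y)).sub
    (hm.tens hm)).congr_deriv ?_
  rw [hm0]
  ext u
  simp only [add_apply, sub_apply, smul_apply, tens_apply, inner_sub_left, real_inner_smul_left]
  module

end Contamination

section Eigenvalue

variable {E : Type*} [NormedAddCommGroup E] [InnerProductSpace ℝ E]

theorem HasDerivAt.inner_eq_zero_of_norm_eventuallyEq {w : ℝ → E} {w' : E} {t c : ℝ}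
    (hw : HasDerivAt w w' t) (hnorm : ∀ᶠ h in 𝓝 t, ‖w h‖ = c) : ⟪w t, w'⟫ = 0 := by
  have hconst : HasDerivAt (‖w ·‖ ^ 2) 0 t :=
    (hasDerivAt_const t (c ^ 2)).congr_of_eventuallyEq
      (hnorm.mono fun h hh => by simp only [hh])
  have := hw.norm_sq.unique hconst
  linarith

theorem hasDerivAt_eigenvalue {A : ℝ → E →L[ℝ] E} {A' : E →L[ℝ] E} {lam : ℝ → ℝ}
    {w : ℝ → E} {t : ℝ} (hA : HasDerivAt A A' t) (hsymm : (A t : E →ₗ[ℝ] E).IsSymmetric)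
    (hw : DifferentiableAt ℝ w t)
    (heig : ∀ᶠ h in 𝓝 t, ‖w h‖ = 1 ∧ A h (w h) = lam h • w h) :
    HasDerivAt lam ⟪w t, A' (w t)⟫ t := by
  set w' := deriv w t
  have hw' : HasDerivAt w w' t := hw.hasDerivAt
  have horth : ⟪w t, w'⟫ = 0 := hw'.inner_eq_zero_of_norm_eventuallyEq (heig.mono fun _ h => h.1)
  have hlam : lam =ᶠ[𝓝 t] fun h => ⟪w h, A h (w h)⟫ := heig.mono fun h ⟨hnorm, hAw⟩ => by
    show lam h = ⟪w h, A h (w h)⟫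
    rw [hAw, real_inner_smul_right, real_inner_self_eq_norm_sq, hnorm, one_pow, mul_one]
  have hAwt : A t (w t) = lam t • w t := heig.self_of_nhds.2
  have hcross : ⟪w t, A t w'⟫ + ⟪w', A t (w t)⟫ = 0 := by
    have hs : ⟪w t, A t w'⟫ = ⟪A t (w t), w'⟫ := (hsymm (w t) w').symm
    rw [hs, hAwt, real_inner_smul_left, real_inner_smul_right, real_inner_comm (w t) w', horth]
    ring
  refine ((hw'.inner ℝ (hA.clm_apply hw')).congr_of_eventuallyEq hlam).congr_deriv ?_
  rw [inner_add_right, add_assoc, hcross, add_zero]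

end Eigenvalue

theorem influence_function_of_eigenvalue_general
    {H : Type*} [NormedAddCommGroup H] [InnerProductSpace ℝ H]
    (N : ℕ) (hN : 0 < N) (Y : Fin N → H)
    (μ : H) (hμ : μ = (N : ℝ)⁻¹ • ∑ k, Y k)
    (Γ : H →L[ℝ] H) (hΓ : Γ = (N : ℝ)⁻¹ • ∑ k, tens (Y k - μ) (Y k - μ))
    (y : H)
    (μf : ℝ → H) (hμf : ∀ h, μf h = ((N : ℝ) + h)⁻¹ • (∑ k, Y k + h • y))
    (Γf : ℝ → H →L[ℝ] H)
    (hΓf : ∀ h, Γf h = ((N : ℝ) + h)⁻¹ • (∑ k, tens (Y k) (Y k) + h • tens y y)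
        - tens (μf h) (μf h))
    (lamj : ℝ) (vj : H) (hvj : ‖vj‖ = 1) (heig : Γ vj = lamj • vj)
    (lamF : ℝ → ℝ) (w : ℝ → H)
    (hw0 : w 0 = vj)
    (hnear : ∀ᶠ h in 𝓝 (0 : ℝ), ‖w h‖ = 1 ∧ Γf h (w h) = lamF h • w h)
    (hwdiff : DifferentiableAt ℝ w 0) :
    HasDerivAt lamF ((N : ℝ)⁻¹ * (⟪y - μ, vj⟫ ^ 2 - lamj)) 0 := by
  have hN0 : (N : ℝ) ≠ 0 := Nat.cast_ne_zero.mpr hN.ne'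
  have hsum : ∑ k, Y k = (N : ℝ) • μ := by rw [hμ, smul_inv_smul₀ hN0]
  have hsumTens : ∑ k, tens (Y k) (Y k) = (N : ℝ) • (Γ + tens μ μ) := by
    rw [hΓ, smul_add, smul_inv_smul₀ hN0, sum_tens_sub_mean Y (by simpa using hsum),
      Fintype.card_fin, sub_add_cancel]
  have hΓf_eq : Γf = fun h : ℝ => ((N : ℝ) + h)⁻¹ • ((N : ℝ) • (Γ + tens μ μ) + h • tens y y)
      - tens (((N : ℝ) + h)⁻¹ • ((N : ℝ) • μ + h • y)) (((N : ℝ) + h)⁻¹ • ((N : ℝ) • μ + h • y)) :=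
    funext fun h => by rw [hΓf, hμf, hsum, hsumTens]
  have hΓf0 : Γf 0 = Γ := by simp [hΓf_eq, hN0]
  have hsymm : (Γ : H →ₗ[ℝ] H).IsSymmetric := by
    rw [hΓ, ContinuousLinearMap.toLinearMap_smul, ContinuousLinearMap.toLinearMap_sum]
    exact (LinearMap.isSymmetric_sum _ fun k _ => isSymmetric_tens_self _).smul (conj_trivial _)
  have hderiv := hasDerivAt_eigenvalue (hΓf_eq ▸ hasDerivAt_contaminated_covariance hN0 μ y Γ)
    (hΓf0 ▸ hsymm) hwdiff hnear
  refine hderiv.congr_deriv ?_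
  rw [hw0, smul_apply, sub_apply, real_inner_smul_right, inner_sub_right, inner_tens_self_apply,
    heig, real_inner_smul_right, real_inner_self_eq_norm_sq, hvj, one_pow, mul_one]

/-- Let `λ_j` be an eigenvalue of `Γ` with unit eigenvector `v_j`, and suppose that
`h ↦ λ(h)` and `h ↦ w(h)` satisfy `λ(0) = λ_j`, `w(0) = v_j`, `‖w(h)‖ = 1` and
`Γ(h) w(h) = λ(h) w(h)` for all `h` near `0`, with `w` differentiable at `0`, where `Γ(h)` is
the perturbed covariance operator.  Then `λ` is differentiable at `0` with derivative
`λ′(0) = (1/N)(⟪y − μ, v_j⟫² − λ_j)`: the influence function of the eigenvalue is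
`Iλ_j(M, y) = (1/N)(⟪y − μ, v_j⟫² − λ_j)`. -/
theorem influence_function_of_eigenvalue
    {H : Type*} [NormedAddCommGroup H] [InnerProductSpace ℝ H] [CompleteSpace H]
    (N : ℕ) (hN : 0 < N) (Y : Fin N → H)
    (μ : H) (hμ : μ = (N : ℝ)⁻¹ • ∑ k, Y k)
    (Γ : H →L[ℝ] H) (hΓ : Γ = (N : ℝ)⁻¹ • ∑ k, tens (Y k - μ) (Y k - μ))
    (y : H)
    (μf : ℝ → H) (hμf : ∀ h, μf h = ((N : ℝ) + h)⁻¹ • (∑ k, Y k + h • y))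
    (Γf : ℝ → H →L[ℝ] H)
    (hΓf : ∀ h, Γf h = ((N : ℝ) + h)⁻¹ • (∑ k, tens (Y k) (Y k) + h • tens y y)
        - tens (μf h) (μf h))
    (lamj : ℝ) (vj : H) (hvj : ‖vj‖ = 1) (heig : Γ vj = lamj • vj)
    (lamF : ℝ → ℝ) (w : ℝ → H)
    (hlam0 : lamF 0 = lamj) (hw0 : w 0 = vj)
    (hnear : ∀ᶠ h in 𝓝 (0 : ℝ), ‖w h‖ = 1 ∧ Γf h (w h) = lamF h • w h)
    (hwdiff : DifferentiableAt ℝ w 0) :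
    HasDerivAt lamF ((N : ℝ)⁻¹ * (⟪y - μ, vj⟫ ^ 2 - lamj)) 0 :=
  influence_function_of_eigenvalue_general N hN Y μ hμ Γ hΓ y μf hμf Γf hΓf lamj vj hvj heig lamF w
    hw0 hnear hwdiff
end
end

section
/- Let s ⊆ U be a nonempty sample, N̂ = ∑_{k∈s} 1/π_k, μ̂ = (1/N̂) ∑_{k∈s} Y_k/π_k and Γ̂ = (1/N̂) ∑_{k∈s} (Y_k ⊗ Y_k)/π_k − μ̂ ⊗ μ̂. Then the remainder of the first-order von Mises expansion of the covariance functional satisfies the exact identity Γ̂ − Γ − (1/N) ∑_{k∈s} (1/π_k) ((Y_k − μ) ⊗ (Y_k − μ) − Γ) = (N̂/N − 1) (Γ − Γ̂) − (N̂/N) (μ − μ̂) ⊗ (μ − μ̂). -/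
/-!
Summing the centred rank-one operators with the weights `1/π_k` and expanding around the
weighted mean `μ̂` (the König–Huygens decomposition) gives
`∑_{k∈s} (1/π_k) ((Y_k − μ) ⊗ (Y_k − μ) − Γ) = N̂ (Γ̂ − Γ + (μ − μ̂) ⊗ (μ − μ̂))`;
dividing by `N` and rearranging gives the identity.
-/

open scoped RealInnerProductSpace

noncomputable section

section Tens

variable {H : Type*} [NormedAddCommGroup H] [InnerProductSpace ℝ H]

lemma tens_sub_left (a b c : H) : tens (a - b) c = tens a c - tens b c := by
  ext u; simp [tens, sub_smul]

lemma tens_sub_right (a b c : H) : tens a (b - c) = tens a b - tens a c := by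
  ext u; simp [tens, smul_sub]

lemma tens_smul_left (r : ℝ) (a b : H) : tens (r • a) b = r • tens a b := by
  ext u; simp [tens, smul_smul]

lemma tens_smul_right (r : ℝ) (a b : H) : tens a (r • b) = r • tens a b := by
  ext u; simp [tens, smul_smul, mul_comm]

lemma tens_sum_left {ι : Type*} (t : Finset ι) (f : ι → H) (b : H) :
    tens (∑ i ∈ t, f i) b = ∑ i ∈ t, tens (f i) b := by
  ext u; simp [tens, Finset.sum_smul]

lemma tens_sum_right {ι : Type*} (t : Finset ι) (a : H) (f : ι → H) :
    tens a (∑ i ∈ t, f i) = ∑ i ∈ t, tens a (f i) := by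
  ext u; simp [tens, Finset.smul_sum]

lemma tens_sub_sub (a c : H) :
    tens (a - c) (a - c) = tens a a - tens c a - tens a c + tens c c := by
  rw [tens_sub_left, tens_sub_right, tens_sub_right]
  abel

lemma sum_smul_tens_sub_sub {ι : Type*} (s : Finset ι) (w : ι → ℝ) (Y : ι → H) (c m : H)
    (hm : ∑ k ∈ s, w k • Y k = (∑ k ∈ s, w k) • m) :
    ∑ k ∈ s, w k • tens (Y k - c) (Y k - c)
      = ∑ k ∈ s, w k • tens (Y k) (Y k) - (∑ k ∈ s, w k) • tens m m
        + (∑ k ∈ s, w k) • tens (c - m) (c - m) := by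
  have hexpand : ∀ k, w k • tens (Y k - c) (Y k - c)
      = w k • tens (Y k) (Y k) - tens c (w k • Y k) - tens (w k • Y k) c + w k • tens c c := by
    intro k
    rw [tens_sub_sub, tens_smul_left, tens_smul_right, smul_add, smul_sub, smul_sub]
  rw [Finset.sum_congr rfl fun k _ ↦ hexpand k, Finset.sum_add_distrib, Finset.sum_sub_distrib,
    Finset.sum_sub_distrib, ← tens_sum_left, ← tens_sum_right, ← Finset.sum_smul, hm,
    tens_smul_left, tens_smul_right, tens_sub_sub]
  module

end Tens

theorem von_mises_remainder_identity_for_covariance_general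
    {H : Type*} [NormedAddCommGroup H] [InnerProductSpace ℝ H]
    (N : ℕ) (Y : Fin N → H)
    (π : Fin N → ℝ) (hπpos : ∀ k, 0 < π k)
    (s : Finset (Fin N)) (hs : s.Nonempty)
    (μ : H)
    (Γ : H →L[ℝ] H)
    (Nhat : ℝ) (hNhat : Nhat = ∑ k ∈ s, (π k)⁻¹)
    (μhat : H) (hμhat : μhat = Nhat⁻¹ • ∑ k ∈ s, (π k)⁻¹ • Y k)
    (Γhat : H →L[ℝ] H)
    (hΓhat : Γhat = Nhat⁻¹ • (∑ k ∈ s, (π k)⁻¹ • tens (Y k) (Y k)) - tens μhat μhat) :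
    Γhat - Γ - (N : ℝ)⁻¹ • ∑ k ∈ s, (π k)⁻¹ • (tens (Y k - μ) (Y k - μ) - Γ)
      = (Nhat / (N : ℝ) - 1) • (Γ - Γhat)
        - (Nhat / (N : ℝ)) • tens (μ - μhat) (μ - μhat) := by
  have hNhat_ne : Nhat ≠ 0 :=
    hNhat ▸ (Finset.sum_pos (fun k _ ↦ inv_pos.2 (hπpos k)) hs).ne'
  have hmean : ∑ k ∈ s, (π k)⁻¹ • Y k = (∑ k ∈ s, (π k)⁻¹) • μhat := by
    rw [← hNhat, hμhat, smul_inv_smul₀ hNhat_ne]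
  have hsecond : ∑ k ∈ s, (π k)⁻¹ • tens (Y k) (Y k) = Nhat • (Γhat + tens μhat μhat) := by
    rw [hΓhat, sub_add_cancel, smul_inv_smul₀ hNhat_ne]
  have hsum : ∑ k ∈ s, (π k)⁻¹ • (tens (Y k - μ) (Y k - μ) - Γ)
      = Nhat • (Γhat - Γ + tens (μ - μhat) (μ - μhat)) := by
    simp only [smul_sub, Finset.sum_sub_distrib, ← Finset.sum_smul,
      sum_smul_tens_sub_sub s _ Y μ μhat hmean, hsecond, ← hNhat]
    module
  rw [hsum, div_eq_mul_inv]
  module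

/-- For a nonempty sample `s ⊆ U`, with `N̂ = ∑_{k∈s} 1/π_k`,
`μ̂ = (1/N̂) ∑_{k∈s} Y_k/π_k` and `Γ̂ = (1/N̂) ∑_{k∈s} (Y_k ⊗ Y_k)/π_k − μ̂ ⊗ μ̂`, the
remainder of the first-order von Mises expansion of the covariance functional satisfies the
exact identity
`Γ̂ − Γ − (1/N) ∑_{k∈s} (1/π_k)((Y_k − μ) ⊗ (Y_k − μ) − Γ)
  = (N̂/N − 1)(Γ − Γ̂) − (N̂/N)(μ − μ̂) ⊗ (μ − μ̂)`. -/
theorem von_mises_remainder_identity_for_covariance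
    {H : Type*} [NormedAddCommGroup H] [InnerProductSpace ℝ H] [CompleteSpace H]
    (N : ℕ) (hN : 0 < N) (Y : Fin N → H)
    (π : Fin N → ℝ) (hπpos : ∀ k, 0 < π k)
    (s : Finset (Fin N)) (hs : s.Nonempty)
    (μ : H) (hμ : μ = (N : ℝ)⁻¹ • ∑ k, Y k)
    (Γ : H →L[ℝ] H) (hΓ : Γ = (N : ℝ)⁻¹ • ∑ k, tens (Y k - μ) (Y k - μ))
    (Nhat : ℝ) (hNhat : Nhat = ∑ k ∈ s, (π k)⁻¹)
    (μhat : H) (hμhat : μhat = Nhat⁻¹ • ∑ k ∈ s, (π k)⁻¹ • Y k)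
    (Γhat : H →L[ℝ] H)
    (hΓhat : Γhat = Nhat⁻¹ • (∑ k ∈ s, (π k)⁻¹ • tens (Y k) (Y k)) - tens μhat μhat) :
    Γhat - Γ - (N : ℝ)⁻¹ • ∑ k ∈ s, (π k)⁻¹ • (tens (Y k - μ) (Y k - μ) - Γ)
      = (Nhat / (N : ℝ) - 1) • (Γ - Γhat)
        - (Nhat / (N : ℝ)) • tens (μ - μhat) (μ - μhat) :=
  von_mises_remainder_identity_for_covariance_general N Y π hπpos s hs μ Γ Nhat hNhat μhat hμhat
    Γhat hΓhat
end
end
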